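/- arXiv:2508.12510 — 2 statements merged into one kernel-verified Lean document; each statement's English description precedes it below -/
import Mathlib

section
/- Suppose a p×q matrix X admits two decompositions X = μ·1_p 1_q^⊤ + α 1_q^⊤ + 1_p β^⊤ + C + E and X = μ'·1_p 1_q^⊤ + α' 1_q^⊤ + 1_p β'^⊤ + C' + E with the same E, where 1_p^⊤ C = 0, C 1_q = 0, 1_p^⊤ C' = 0, C' 1_q = 0, min_i α_i = min_i α'_i = 0, and min_j β_j = min_j β'_j = 0. Then μ = μ', α = α', β = β', and C = C'. -/
open Matrix

lemma mefm_aux_shift_zero {ι : Type*} [Fintype ι] [Nonempty ι]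
    (f g : ι → ℝ) (c : ℝ) (h : ∀ i, f i = g i + c)
    (hf : (⨅ i, f i) = 0) (hg : (⨅ i, g i) = 0) : c = 0 := by
  have bf : BddBelow (Set.range f) := (Set.finite_range f).bddBelow
  have bg : BddBelow (Set.range g) := (Set.finite_range g).bddBelow
  have hfle : ∀ i, (0:ℝ) ≤ f i := fun i => hf ▸ ciInf_le bf i
  have hgle : ∀ i, (0:ℝ) ≤ g i := fun i => hg ▸ ciInf_le bg i
  obtain ⟨i₀, hi₀⟩ := Finite.exists_min f
  obtain ⟨j₀, hj₀⟩ := Finite.exists_min g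
  have hf0 : f i₀ = 0 := le_antisymm (hf ▸ le_ciInf hi₀) (hfle i₀)
  have hg0 : g j₀ = 0 := le_antisymm (hg ▸ le_ciInf hj₀) (hgle j₀)
  have h1 := h i₀
  have h2 := h j₀
  have := hgle i₀
  have := hfle j₀
  linarith

theorem mefm_identification
    {ι κ : Type*} [Fintype ι] [Fintype κ] [Nonempty ι] [Nonempty κ]
    (X C C' E : Matrix ι κ ℝ) (μ μ' : ℝ) (α α' : ι → ℝ) (β β' : κ → ℝ)
    (hX : ∀ i j, X i j = μ + α i + β j + C i j + E i j)
    (hX' : ∀ i j, X i j = μ' + α' i + β' j + C' i j + E i j)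
    (hCcol : ∀ j, ∑ i, C i j = 0) (hCrow : ∀ i, ∑ j, C i j = 0)
    (hCcol' : ∀ j, ∑ i, C' i j = 0) (hCrow' : ∀ i, ∑ j, C' i j = 0)
    (hα : (⨅ i, α i) = 0) (hα' : (⨅ i, α' i) = 0)
    (hβ : (⨅ j, β j) = 0) (hβ' : (⨅ j, β' j) = 0) :
    μ = μ' ∧ α = α' ∧ β = β' ∧ C = C' := by
  have key : ∀ i j, μ + α i + β j + C i j = μ' + α' i + β' j + C' i j := by
    intro i j
    have h1 := hX i j
    have h2 := hX' i j
    linarith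
  have hp0 : (0:ℝ) < (Fintype.card ι : ℝ) := by
    exact_mod_cast Fintype.card_pos
  have hq0 : (0:ℝ) < (Fintype.card κ : ℝ) := by
    exact_mod_cast Fintype.card_pos
  -- row sums
  have hrow : ∀ i, (Fintype.card κ : ℝ) * μ + (Fintype.card κ : ℝ) * α i + (∑ j, β j)
      = (Fintype.card κ : ℝ) * μ' + (Fintype.card κ : ℝ) * α' i + (∑ j, β' j) := by
    intro i
    have h := Finset.sum_congr rfl (fun j (_ : j ∈ Finset.univ) => key i j)
    simp only [Finset.sum_add_distrib, Finset.sum_const, Finset.card_univ,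
      nsmul_eq_mul, hCrow i, hCrow' i] at h
    linarith
  -- column sums
  have hcol : ∀ j, (Fintype.card ι : ℝ) * μ + (∑ i, α i) + (Fintype.card ι : ℝ) * β j
      = (Fintype.card ι : ℝ) * μ' + (∑ i, α' i) + (Fintype.card ι : ℝ) * β' j := by
    intro j
    have h := Finset.sum_congr rfl (fun i (_ : i ∈ Finset.univ) => key i j)
    simp only [Finset.sum_add_distrib, Finset.sum_const, Finset.card_univ,
      nsmul_eq_mul, hCcol j, hCcol' j] at h
    linarith
  -- α differs from α' by a constant
  set cA : ℝ := ((Fintype.card κ : ℝ) * (μ' - μ) + (∑ j, β' j) - (∑ j, β j)) / (Fintype.card κ : ℝ) with hcA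
  have hαshift : ∀ i, α i = α' i + cA := by
    intro i
    have h := hrow i
    rw [hcA]
    field_simp
    ring_nf
    ring_nf at h
    linarith
  have hcA0 : cA = 0 := mefm_aux_shift_zero α α' cA hαshift hα hα'
  have hαα : α = α' := by
    funext i
    have := hαshift i
    rw [hcA0] at this
    linarith
  -- β differs from β' by a constant
  set cB : ℝ := ((Fintype.card ι : ℝ) * (μ' - μ) + (∑ i, α' i) - (∑ i, α i)) / (Fintype.card ι : ℝ) with hcB
  have hβshift : ∀ j, β j = β' j + cB := by
    intro j
    have h := hcol j
    rw [hcB]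
    field_simp
    ring_nf
    ring_nf at h
    linarith
  have hcB0 : cB = 0 := mefm_aux_shift_zero β β' cB hβshift hβ hβ'
  have hββ : β = β' := by
    funext j
    have := hβshift j
    rw [hcB0] at this
    linarith
  -- μ = μ'
  have hμμ : μ = μ' := by
    have hSα : (∑ i, α i) = ∑ i, α' i := by rw [hαα]
    have h := hcol (Classical.arbitrary κ)
    have hb := hββ
    have : β (Classical.arbitrary κ) = β' (Classical.arbitrary κ) := by rw [hββ]
    nlinarith [hp0]
  refine ⟨hμμ, hαα, hββ, ?_⟩
  funext i j
  have h := key i j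
  rw [hμμ, hαα, hββ] at h
  linarith
end

section
/- Let C be any p×q real matrix and M_p, M_q the centering matrices. Then C can be decomposed as C = μ·1_p 1_q^⊤ + α·1_q^⊤ + 1_p·β^⊤ + M_p C M_q, where μ = (pq)^{-1} 1_p^⊤ C 1_q + min{ q^{-1} M_p C 1_q } + min{ p^{-1} M_q C^⊤ 1_p }, α = q^{-1} M_p C 1_q − 1_p·min{ q^{-1} M_p C 1_q }, and β = p^{-1} M_q C^⊤ 1_p − 1_q·min{ p^{-1} M_q C^⊤ 1_p }. Moreover min_i α_i = 0, min_j β_j = 0, 1_p^⊤ (M_p C M_q) = 0, and (M_p C M_q) 1_q = 0. -/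
open Matrix

noncomputable def centering (ι : Type*) [Fintype ι] [DecidableEq ι] : Matrix ι ι ℝ :=
  1 - ((Fintype.card ι : ℝ))⁻¹ • Matrix.of (fun _ _ => (1 : ℝ))

lemma MCM_entry {ι κ : Type*} [Fintype ι] [Fintype κ] [DecidableEq ι] [DecidableEq κ]
    (C : Matrix ι κ ℝ) (i : ι) (j : κ) :
    (centering ι * C * centering κ) i j =
      C i j - (Fintype.card ι : ℝ)⁻¹ * ∑ k, C k j - (Fintype.card κ : ℝ)⁻¹ * ∑ l, C i l
        + (Fintype.card ι : ℝ)⁻¹ * ((Fintype.card κ : ℝ)⁻¹ * ∑ k, ∑ l, C k l) := by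
  simp [centering, Matrix.mul_apply, Matrix.sub_apply, Matrix.one_apply, sub_mul, mul_sub,
    Finset.sum_sub_distrib, Finset.mul_sum, Finset.sum_mul]
  rw [Finset.sum_comm]
  simp only [mul_comm, mul_assoc, mul_left_comm]
  ring

lemma iInf_exists_min {ι : Type*} [Fintype ι] [Nonempty ι] (a : ι → ℝ) :
    ∃ i0, (⨅ i, a i) = a i0 ∧ ∀ i, a i0 ≤ a i := by
  obtain ⟨i0, h⟩ := Finite.exists_min a
  exact ⟨i0, le_antisymm (ciInf_le (Set.finite_range a).bddBelow i0) (le_ciInf h), h⟩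

lemma iInf_sub_iInf {ι : Type*} [Fintype ι] [Nonempty ι] (a : ι → ℝ) :
    (⨅ i, (a i - ⨅ i', a i')) = 0 := by
  obtain ⟨i0, h0, h⟩ := iInf_exists_min a
  refine le_antisymm ((ciInf_le (Set.finite_range _).bddBelow i0).trans (by rw [h0]; simp))
    (le_ciInf fun i => by rw [h0]; simpa using h i)

lemma a_formula {ι κ : Type*} [Fintype ι] [Fintype κ] [DecidableEq ι]
    (C : Matrix ι κ ℝ) (i : ι) :
    ((Fintype.card κ : ℝ))⁻¹ * (centering ι *ᵥ (C *ᵥ fun _ => 1)) i =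
      (Fintype.card κ : ℝ)⁻¹ * ∑ l, C i l
        - (Fintype.card ι : ℝ)⁻¹ * ((Fintype.card κ : ℝ)⁻¹ * ∑ k, ∑ l, C k l) := by
  simp [centering, Matrix.mulVec, dotProduct, Matrix.sub_apply, Matrix.one_apply, sub_mul,
    Finset.sum_sub_distrib, Finset.mul_sum, mul_sub]
  exact Finset.sum_congr rfl fun x _ => Finset.sum_congr rfl fun y _ => by ring

lemma b_formula {ι κ : Type*} [Fintype ι] [Fintype κ] [DecidableEq κ]
    (C : Matrix ι κ ℝ) (j : κ) :
    ((Fintype.card ι : ℝ))⁻¹ * (centering κ *ᵥ (Cᵀ *ᵥ fun _ => 1)) j =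
      (Fintype.card ι : ℝ)⁻¹ * ∑ k, C k j
        - (Fintype.card ι : ℝ)⁻¹ * ((Fintype.card κ : ℝ)⁻¹ * ∑ k, ∑ l, C k l) := by
  have := a_formula Cᵀ j
  simp only [Matrix.transpose_apply] at this
  rw [this, Finset.sum_comm]
  ring

theorem mefm_construction
    {ι κ : Type*} [Fintype ι] [Fintype κ] [DecidableEq ι] [DecidableEq κ]
    [Nonempty ι] [Nonempty κ]
    (C : Matrix ι κ ℝ)
    (p q : ℝ) (hp : p = Fintype.card ι) (hq : q = Fintype.card κ)
    (a : ι → ℝ) (b : κ → ℝ)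
    (ha : a = fun i => q⁻¹ * (centering ι *ᵥ (C *ᵥ fun _ => 1)) i)
    (hb : b = fun j => p⁻¹ * (centering κ *ᵥ (Cᵀ *ᵥ fun _ => 1)) j)
    (μ : ℝ) (α : ι → ℝ) (β : κ → ℝ)
    (hμ : μ = (p * q)⁻¹ * (∑ i, ∑ j, C i j) + (⨅ i, a i) + (⨅ j, b j))
    (hα : α = fun i => a i - ⨅ i', a i')
    (hβ : β = fun j => b j - ⨅ j', b j') :
    (∀ i j, C i j = μ + α i + β j + (centering ι * C * centering κ) i j) ∧
    (⨅ i, α i) = 0 ∧ (⨅ j, β j) = 0 ∧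
    (∀ j, ∑ i, (centering ι * C * centering κ) i j = 0) ∧
    (∀ i, ∑ j, (centering ι * C * centering κ) i j = 0) := by
  have hP : (Fintype.card ι : ℝ) ≠ 0 := Nat.cast_ne_zero.2 Fintype.card_ne_zero
  have hQ : (Fintype.card κ : ℝ) ≠ 0 := Nat.cast_ne_zero.2 Fintype.card_ne_zero
  subst hp hq ha hb hμ hα hβ
  refine ⟨?_, iInf_sub_iInf _, iInf_sub_iInf _, ?_, ?_⟩
  · intro i j
    have hai := a_formula C i
    have hbj := b_formula C j
    rw [MCM_entry]
    simp only
    rw [hai, hbj, mul_inv]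
    ring
  · intro j
    simp only [MCM_entry, Finset.sum_add_distrib, Finset.sum_sub_distrib, Finset.sum_const,
      Finset.card_univ, nsmul_eq_mul, ← Finset.mul_sum]
    field_simp
    ring
  · intro i
    simp only [MCM_entry, Finset.sum_add_distrib, Finset.sum_sub_distrib, Finset.sum_const,
      Finset.card_univ, nsmul_eq_mul, ← Finset.mul_sum]
    rw [Finset.sum_comm]
    field_simp
    ring
end
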